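/- arXiv:2001.10896 — 5 statements merged into one kernel-verified Lean document; each statement's English description precedes it below -/
import Mathlib

section
/- Let 0 < α < 1, let a < b be real numbers, and let f : [a,b] → ℝ be absolutely continuous such that t ↦ (I_a^{1-α} f)(t) is also absolutely continuous on [a,b] and the limit L = lim_{t→a⁺} (I_a^{1-α} f)(t) exists. Then for every t ∈ (a,b), (I_a^α (D_a^{RL,α} f))(t) = f(t) − L / (Γ(α) (t-a)^{1-α}). -/
open MeasureTheory Filter Topology Set

/-- Riemann–Liouville fractional integral of order `α` with base point `a`:
`(I_a^α f)(t) = (1/Γ(α)) ∫_a^t (t-τ)^(α-1) f(τ) dτ`. -/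
noncomputable def rlInt (a α : ℝ) (f : ℝ → ℝ) (t : ℝ) : ℝ :=
  (1 / Real.Gamma α) * ∫ τ in a..t, (t - τ) ^ (α - 1) * f τ

/-- Riemann–Liouville fractional derivative of order `α ∈ (0,1)` with base point `a`:
`(D_a^{RL,α} f)(t) = d/dt (I_a^{1-α} f)(t)`. -/
noncomputable def rlDeriv (a α : ℝ) (f : ℝ → ℝ) (t : ℝ) : ℝ :=
  deriv (rlInt a (1 - α) f) t

/-- Caputo fractional derivative of order `α ∈ (0,1)` with base point `a`:
`(D_a^{C,α} f)(t) = (1/Γ(1-α)) ∫_a^t (t-τ)^(-α) f'(τ) dτ`. -/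
noncomputable def caputoDeriv (a α : ℝ) (f : ℝ → ℝ) (t : ℝ) : ℝ :=
  (1 / Real.Gamma (1 - α)) * ∫ τ in a..t, (t - τ) ^ (-α) * deriv f τ

/-- Absolute continuity of `f` on `[a,b]`, via the integral characterization:
`f(t) = f(a) + ∫_a^t g` for some integrable `g`. -/
def AbsContOn (f : ℝ → ℝ) (a b : ℝ) : Prop :=
  ∃ g : ℝ → ℝ, IntervalIntegrable g MeasureTheory.volume a b ∧
    ∀ t ∈ Set.Icc a b, f t = f a + ∫ τ in a..t, g τ

/-- The Wright function `W(x,ρ,β) = ∑_{k} x^k / (k! Γ(ρk+β))`. -/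
noncomputable def wright (x ρ β : ℝ) : ℝ :=
  ∑' k : ℕ, x ^ k / ((Nat.factorial k : ℝ) * Real.Gamma (ρ * (k : ℝ) + β))

/-- The error function `erf(x) = (2/√π) ∫_0^x e^{-z²} dz`. -/
noncomputable def erfReal (x : ℝ) : ℝ :=
  (2 / Real.sqrt Real.pi) * ∫ z in (0:ℝ)..x, Real.exp (-z ^ 2)


/-!
Write `f = f a + ∫_a^· h` with `h` integrable. The semigroup law `I^p (I^q h) = I^(p+q) h`
(Fubini on the triangle `a < u < s < t` together with the Beta integral) turns `I^(1-α) f` into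
`∫_a^· g` with `g u = f a (u - a)^(-α) / Γ(1-α) + I^(1-α) h u`, an integrable function. Hence
`I^(1-α) f` tends to `0` at `a`, which forces `L = 0`, and its derivative equals `g` almost
everywhere. The semigroup law once more gives `I^α g = f a + I^1 h = f`.
-/

open ProbabilityTheory (beta)

theorem integral_sub_rpow_mul_sub_rpow {p q u t : ℝ} (hp : 0 < p) (hq : 0 < q) (hut : u < t) :
    ∫ s in u..t, (t - s) ^ (p - 1) * (s - u) ^ (q - 1) =
      (t - u) ^ (p + q - 1) * beta p q := by
  have hc : 0 < t - u := sub_pos.2 hut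
  have hshift := intervalIntegral.integral_comp_sub_right
    (fun x => (t - u - x) ^ (p - 1) * x ^ (q - 1)) u (a := u) (b := t)
  simp only [sub_sub_sub_cancel_right, sub_self] at hshift
  rw [hshift]
  apply Complex.ofReal_injective
  rw [← intervalIntegral.integral_ofReal]
  have hcongr : ∫ x in (0 : ℝ)..t - u, (((t - u - x) ^ (p - 1) * x ^ (q - 1) : ℝ) : ℂ) =
      ∫ x in (0 : ℝ)..t - u,
        (x : ℂ) ^ (q - 1 : ℂ) * ((t - u : ℝ) - (x : ℂ)) ^ (p - 1 : ℂ) := by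
    refine intervalIntegral.integral_congr fun x hx => ?_
    rw [uIcc_of_le hc.le] at hx
    rw [Complex.ofReal_mul, Complex.ofReal_cpow (sub_nonneg.2 hx.2), Complex.ofReal_cpow hx.1]
    push_cast
    ring
  rw [hcongr, Complex.betaIntegral_scaled _ _ hc,
    Complex.betaIntegral_eq_Gamma_mul_div _ _ (by simpa) (by simpa), beta]
  push_cast
  rw [Complex.ofReal_cpow hc.le, ← Complex.Gamma_ofReal, ← Complex.Gamma_ofReal,
    ← Complex.Gamma_ofReal]
  push_cast
  ring_nf

theorem intervalIntegrable_sub_rpow_mul_sub_rpow {p q u t : ℝ} (hp : 0 < p) (hq : 0 < q)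
    (hut : u < t) :
    IntervalIntegrable (fun s => (t - s) ^ (p - 1) * (s - u) ^ (q - 1)) volume u t := by
  -- a non-integrable function would have integral `0`
  refine intervalIntegral.intervalIntegrable_of_integral_ne_zero ?_
  rw [integral_sub_rpow_mul_sub_rpow hp hq hut]
  exact (mul_pos (Real.rpow_pos_of_pos (sub_pos.2 hut) _) (ProbabilityTheory.beta_pos hp hq)).ne'

section Semigroup

variable {a t p q : ℝ} {h : ℝ → ℝ}

noncomputable def rlIteratedIntegrand (t p q : ℝ) (h : ℝ → ℝ) : ℝ × ℝ → ℝ :=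
  {z | z.2 < z.1}.indicator fun z => (t - z.1) ^ (p - 1) * (z.1 - z.2) ^ (q - 1) * h z.2

theorem rlIteratedIntegrand_eq_indicator_Ioi (u : ℝ) :
    (fun s => rlIteratedIntegrand t p q h (s, u)) =
      (Ioi u).indicator fun s => (t - s) ^ (p - 1) * (s - u) ^ (q - 1) * h u :=
  rfl

theorem rlIteratedIntegrand_eq_indicator_Iio (s : ℝ) :
    (fun u => rlIteratedIntegrand t p q h (s, u)) =
      (Iio s).indicator fun u => (t - s) ^ (p - 1) * (s - u) ^ (q - 1) * h u :=
  rfl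

theorem setIntegral_rlIteratedIntegrand_fst (hp : 0 < p) (hq : 0 < q) {u : ℝ}
    (hu : u ∈ Ioo a t) :
    ∫ s in Ioo a t, rlIteratedIntegrand t p q h (s, u) =
      (t - u) ^ (p + q - 1) * beta p q * h u := by
  rw [rlIteratedIntegrand_eq_indicator_Ioi, setIntegral_indicator measurableSet_Ioi, Ioo_inter_Ioi,
    max_eq_right hu.1.le, ← integral_Ioc_eq_integral_Ioo,
    ← intervalIntegral.integral_of_le hu.2.le, intervalIntegral.integral_mul_const,
    integral_sub_rpow_mul_sub_rpow hp hq hu.2]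

theorem integrableOn_rlIteratedIntegrand_fst (hp : 0 < p) (hq : 0 < q) {u : ℝ}
    (hu : u ∈ Ioo a t) :
    IntegrableOn (fun s => rlIteratedIntegrand t p q h (s, u)) (Ioo a t) := by
  rw [IntegrableOn, rlIteratedIntegrand_eq_indicator_Ioi,
    integrable_indicator_iff measurableSet_Ioi,
    IntegrableOn, Measure.restrict_restrict measurableSet_Ioi, inter_comm, Ioo_inter_Ioi,
    max_eq_right hu.1.le]
  exact (intervalIntegrable_iff_integrableOn_Ioo_of_le hu.2.le).1
    ((intervalIntegrable_sub_rpow_mul_sub_rpow hp hq hu.2).mul_const _)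

theorem setIntegral_rlIteratedIntegrand_snd {s : ℝ} (hs : s ∈ Ioo a t) :
    ∫ u in Ioo a t, rlIteratedIntegrand t p q h (s, u) =
      (t - s) ^ (p - 1) * ∫ u in a..s, (s - u) ^ (q - 1) * h u := by
  rw [rlIteratedIntegrand_eq_indicator_Iio, setIntegral_indicator measurableSet_Iio, Ioo_inter_Iio,
    min_eq_right hs.2.le, ← integral_Ioc_eq_integral_Ioo,
    ← intervalIntegral.integral_of_le hs.1.le,
    ← intervalIntegral.integral_const_mul]
  simp only [mul_assoc]

theorem norm_rlIteratedIntegrand {s u : ℝ} (hs : s ≤ t) :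
    ‖rlIteratedIntegrand t p q h (s, u)‖ =
      rlIteratedIntegrand t p q (fun x => |h x|) (s, u) := by
  by_cases hus : u < s
  · simp only [rlIteratedIntegrand, indicator, mem_ofPred_eq, hus, if_true, Real.norm_eq_abs,
      abs_mul, abs_of_nonneg (Real.rpow_nonneg (sub_nonneg.2 hs) _),
      abs_of_nonneg (Real.rpow_nonneg (sub_nonneg.2 hus.le) _)]
  · simp [rlIteratedIntegrand, indicator, hus]

theorem integrable_rlIteratedIntegrand (hp : 0 < p) (hq : 0 < q) (hpq : 1 ≤ p + q)
    (hh : IntegrableOn h (Ioo a t)) :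
    Integrable (rlIteratedIntegrand t p q h)
      ((volume.restrict (Ioo a t)).prod (volume.restrict (Ioo a t))) := by
  have hmeas : AEStronglyMeasurable (rlIteratedIntegrand t p q h)
      ((volume.restrict (Ioo a t)).prod (volume.restrict (Ioo a t))) := by
    refine AEStronglyMeasurable.indicator ?_ (measurableSet_lt measurable_snd measurable_fst)
    exact (Measurable.aestronglyMeasurable (by fun_prop)).mul hh.aestronglyMeasurable.comp_snd
  have hnorm : ∀ u ∈ Ioo a t,
      ∫ s in Ioo a t, ‖rlIteratedIntegrand t p q h (s, u)‖ =
        (t - u) ^ (p + q - 1) * beta p q * |h u| := by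
    intro u hu
    rw [← setIntegral_rlIteratedIntegrand_fst (h := fun x => |h x|) hp hq hu]
    exact setIntegral_congr_fun measurableSet_Ioo fun s hs => norm_rlIteratedIntegrand hs.2.le
  have hdom : IntegrableOn (fun u => (t - u) ^ (p + q - 1) * beta p q * |h u|) (Ioo a t) := by
    have hcont : ContinuousOn (fun u => (t - u) ^ (p + q - 1) * beta p q) (Icc a t) :=
      (((Real.continuous_rpow_const (by linarith)).comp
        (continuous_const.sub continuous_id)).mul continuous_const).continuousOn
    have habs : IntegrableOn (fun u => |h u|) (Icc a t) := by
      rw [integrableOn_Icc_iff_integrableOn_Ioo]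
      exact hh.abs
    exact (habs.continuousOn_mul hcont isCompact_Icc).mono_set Ioo_subset_Icc_self
  refine (integrable_prod_iff' hmeas).2 ⟨?_, hdom.congr ?_⟩
  · filter_upwards [ae_restrict_mem measurableSet_Ioo] with u hu
      using integrableOn_rlIteratedIntegrand_fst hp hq hu
  · filter_upwards [ae_restrict_mem measurableSet_Ioo] with u hu using (hnorm u hu).symm

theorem integrableOn_sub_rpow_mul_integral (hp : 0 < p) (hq : 0 < q) (hpq : 1 ≤ p + q)
    (hh : IntegrableOn h (Ioo a t)) :
    IntegrableOn (fun s => (t - s) ^ (p - 1) * ∫ u in a..s, (s - u) ^ (q - 1) * h u) (Ioo a t) :=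
  (integrable_rlIteratedIntegrand hp hq hpq hh).integral_prod_left.congr <| by
    filter_upwards [ae_restrict_mem measurableSet_Ioo] with s hs
      using setIntegral_rlIteratedIntegrand_snd hs

theorem integral_sub_rpow_mul_integral (hp : 0 < p) (hq : 0 < q) (hpq : 1 ≤ p + q)
    (hh : IntegrableOn h (Ioo a t)) :
    ∫ s in Ioo a t, (t - s) ^ (p - 1) * ∫ u in a..s, (s - u) ^ (q - 1) * h u =
      beta p q * ∫ u in Ioo a t, (t - u) ^ (p + q - 1) * h u := by
  calc ∫ s in Ioo a t, (t - s) ^ (p - 1) * ∫ u in a..s, (s - u) ^ (q - 1) * h u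
      = ∫ s in Ioo a t, ∫ u in Ioo a t, rlIteratedIntegrand t p q h (s, u) :=
        setIntegral_congr_fun measurableSet_Ioo fun s hs =>
          (setIntegral_rlIteratedIntegrand_snd hs).symm
    _ = ∫ u in Ioo a t, ∫ s in Ioo a t, rlIteratedIntegrand t p q h (s, u) :=
        integral_integral_swap (integrable_rlIteratedIntegrand hp hq hpq hh)
    _ = ∫ u in Ioo a t, (t - u) ^ (p + q - 1) * beta p q * h u :=
        setIntegral_congr_fun measurableSet_Ioo fun u hu =>
          setIntegral_rlIteratedIntegrand_fst hp hq hu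
    _ = _ := by
        rw [← integral_const_mul]
        congr 1
        funext u
        ring

end Semigroup

section RiemannLiouville

variable {a p q t : ℝ} {f g h : ℝ → ℝ}

theorem rlInt_one (f : ℝ → ℝ) : rlInt a 1 f t = ∫ s in a..t, f s := by
  simp [rlInt]

theorem rlInt_const_mul_add (c : ℝ)
    (hf : IntervalIntegrable (fun s => (t - s) ^ (p - 1) * f s) volume a t)
    (hg : IntervalIntegrable (fun s => (t - s) ^ (p - 1) * g s) volume a t) :
    rlInt a p (fun s => c * f s + g s) t = c * rlInt a p f t + rlInt a p g t := by
  have hsplit : ∫ s in a..t, (t - s) ^ (p - 1) * (c * f s + g s) =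
      c * (∫ s in a..t, (t - s) ^ (p - 1) * f s) + ∫ s in a..t, (t - s) ^ (p - 1) * g s := by
    rw [← intervalIntegral.integral_const_mul,
      ← intervalIntegral.integral_add (hf.const_mul c) hg]
    congr 1
    funext s
    ring
  simp only [rlInt, hsplit]
  ring

theorem rlInt_congr_ae (hat : a ≤ t) (hfg : ∀ᵐ s, s ∈ Ioc a t → f s = g s) :
    rlInt a p f t = rlInt a p g t := by
  unfold rlInt
  congr 1
  refine intervalIntegral.integral_congr_ae ?_
  filter_upwards [hfg] with s hs hmem
  rw [hs (uIoc_of_le hat ▸ hmem)]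

theorem rlInt_sub_rpow (hp : 0 < p) (hq : 0 < q) (hat : a < t) :
    rlInt a p (fun s => (s - a) ^ (q - 1)) t =
      Real.Gamma q / Real.Gamma (p + q) * (t - a) ^ (p + q - 1) := by
  rw [rlInt, integral_sub_rpow_mul_sub_rpow hp hq hat, beta]
  field_simp [(Real.Gamma_pos_of_pos hp).ne']

theorem intervalIntegrable_sub_rpow_mul_rlInt (hp : 0 < p) (hq : 0 < q) (hpq : 1 ≤ p + q)
    (hat : a ≤ t) (hh : IntervalIntegrable h volume a t) :
    IntervalIntegrable (fun s => (t - s) ^ (p - 1) * rlInt a q h s) volume a t := by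
  have hIoo := (intervalIntegrable_iff_integrableOn_Ioo_of_le hat).1 hh
  refine ((intervalIntegrable_iff_integrableOn_Ioo_of_le hat).2
    ((integrableOn_sub_rpow_mul_integral hp hq hpq hIoo).const_mul (1 / Real.Gamma q))).congr ?_
  intro s _
  simp only [rlInt]
  ring

theorem rlInt_rlInt (hp : 0 < p) (hq : 0 < q) (hpq : 1 ≤ p + q) (hat : a ≤ t)
    (hh : IntervalIntegrable h volume a t) :
    rlInt a p (rlInt a q h) t = rlInt a (p + q) h t := by
  have hIoo := (intervalIntegrable_iff_integrableOn_Ioo_of_le hat).1 hh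
  have hsemi := integral_sub_rpow_mul_integral hp hq hpq hIoo
  have hinner : ∫ s in a..t, (t - s) ^ (p - 1) * rlInt a q h s = 1 / Real.Gamma q *
      ∫ s in Ioo a t, (t - s) ^ (p - 1) * ∫ u in a..s, (s - u) ^ (q - 1) * h u := by
    rw [intervalIntegral.integral_of_le hat, integral_Ioc_eq_integral_Ioo, ← integral_const_mul]
    congr 1
    funext s
    simp only [rlInt]
    ring
  rw [rlInt, hinner, hsemi, rlInt, intervalIntegral.integral_of_le hat,
    integral_Ioc_eq_integral_Ioo, beta]
  field_simp [(Real.Gamma_pos_of_pos hp).ne', (Real.Gamma_pos_of_pos hq).ne']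

end RiemannLiouville

section Primitive

variable {a b : ℝ} {F g : ℝ → ℝ}

theorem tendsto_nhdsGT_zero_of_eqOn_primitive (hab : a < b) (hg : IntervalIntegrable g volume a b)
    (hF : EqOn F (fun x => ∫ u in a..x, g u) (Ioo a b)) : Tendsto F (𝓝[>] a) (𝓝 0) := by
  have hcont := intervalIntegral.continuousOn_primitive_interval' hg left_mem_uIcc a left_mem_uIcc
  rw [uIcc_of_le hab.le] at hcont
  have hlim := (hcont.mono_of_mem_nhdsWithin (Icc_mem_nhdsGT hab)).tendsto
  rw [intervalIntegral.integral_same] at hlim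
  exact hlim.congr' (eventuallyEq_of_mem (Ioo_mem_nhdsGT hab) hF).symm

theorem ae_deriv_eq_of_eqOn_primitive (hg : IntervalIntegrable g volume a b)
    (hF : EqOn F (fun x => ∫ u in a..x, g u) (Ioo a b)) :
    ∀ᵐ x, x ∈ Ioo a b → deriv F x = g x := by
  filter_upwards [hg.ae_hasDerivAt_integral] with x hx hxab
  have hderiv := hx (Icc_subset_uIcc (Ioo_subset_Icc_self hxab)) a left_mem_uIcc
  exact (hderiv.congr_of_eventuallyEq (eventuallyEq_of_mem (isOpen_Ioo.mem_nhds hxab) hF)).deriv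

end Primitive

section AbsolutelyContinuous

variable {a b c s t α : ℝ} {f h : ℝ → ℝ}

-- `(u - a) ^ (1 - α - 1)` is `(u - a) ^ (-α)`, written in the shape used by `rlInt_sub_rpow`.
noncomputable def rlDerivOfPrimitive (a α c : ℝ) (h : ℝ → ℝ) (u : ℝ) : ℝ :=
  c / Real.Gamma (1 - α) * (u - a) ^ (1 - α - 1) + rlInt a (1 - α) h u

theorem rlInt_one_sub_eq_integral_rlDerivOfPrimitive (hα1 : α < 1) (hs : a < s)
    (hh : IntervalIntegrable h volume a s)
    (hf : ∀ τ ∈ Ioc a s, f τ = c + ∫ u in a..τ, h u) :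
    rlInt a (1 - α) f s = ∫ u in a..s, rlDerivOfPrimitive a α c h u := by
  have hα1' : 0 < 1 - α := sub_pos.2 hα1
  have hf' : rlInt a (1 - α) f s =
      rlInt a (1 - α) (fun τ => c * (τ - a) ^ ((1 : ℝ) - 1) + rlInt a 1 h τ) s :=
    rlInt_congr_ae hs.le <| Eventually.of_forall fun τ hτ => by
      rw [hf τ hτ, rlInt_one, sub_self, Real.rpow_zero, mul_one]
  unfold rlDerivOfPrimitive
  rw [hf', ← rlInt_one,
    rlInt_const_mul_add c (intervalIntegrable_sub_rpow_mul_sub_rpow hα1' one_pos hs)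
      (intervalIntegrable_sub_rpow_mul_rlInt hα1' one_pos (by linarith) hs.le hh),
    rlInt_const_mul_add _ (intervalIntegrable_sub_rpow_mul_sub_rpow one_pos hα1' hs)
      (intervalIntegrable_sub_rpow_mul_rlInt one_pos hα1' (by linarith) hs.le hh),
    rlInt_sub_rpow hα1' one_pos hs, rlInt_sub_rpow one_pos hα1' hs,
    rlInt_rlInt hα1' one_pos (by linarith) hs.le hh,
    rlInt_rlInt one_pos hα1' (by linarith) hs.le hh,
    add_comm (1 - α) 1, Real.Gamma_one]
  field_simp

theorem intervalIntegrable_rlDerivOfPrimitive (hα1 : α < 1) (hab : a < b)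
    (hh : IntervalIntegrable h volume a b) :
    IntervalIntegrable (rlDerivOfPrimitive a α c h) volume a b := by
  have hα1' : 0 < 1 - α := sub_pos.2 hα1
  have hpow := (intervalIntegrable_sub_rpow_mul_sub_rpow one_pos hα1' hab).const_mul
    (c / Real.Gamma (1 - α))
  have hrl := intervalIntegrable_sub_rpow_mul_rlInt one_pos hα1' (by linarith) hab.le hh
  simp only [sub_self, Real.rpow_zero, one_mul] at hpow hrl
  exact hpow.add hrl

theorem rlInt_rlDerivOfPrimitive (hα0 : 0 < α) (hα1 : α < 1) (ht : a < t)
    (hh : IntervalIntegrable h volume a t) :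
    rlInt a α (rlDerivOfPrimitive a α c h) t = c + ∫ u in a..t, h u := by
  have hα1' : 0 < 1 - α := sub_pos.2 hα1
  unfold rlDerivOfPrimitive
  rw [rlInt_const_mul_add _ (intervalIntegrable_sub_rpow_mul_sub_rpow hα0 hα1' ht)
      (intervalIntegrable_sub_rpow_mul_rlInt hα0 hα1' (by linarith) ht.le hh),
    rlInt_sub_rpow hα0 hα1' ht, rlInt_rlInt hα0 hα1' (by linarith) ht.le hh,
    show α + (1 - α) = 1 by ring, rlInt_one, Real.Gamma_one, sub_self, Real.rpow_zero]
  field_simp [hα1'.ne', (Real.Gamma_pos_of_pos hα1').ne']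

end AbsolutelyContinuous

theorem rlInt_rlDeriv_eq_general (α a b L : ℝ) (hα0 : 0 < α) (hα1 : α < 1) (hab : a < b)
    (f : ℝ → ℝ) (hf : AbsContOn f a b)
    (hL : Filter.Tendsto (rlInt a (1 - α) f) (nhdsWithin a (Set.Ioi a)) (nhds L)) :
    ∀ t ∈ Set.Ioo a b,
      rlInt a α (rlDeriv a α f) t = f t - L / (Real.Gamma α * (t - a) ^ (1 - α)) := by
  obtain ⟨h, hh, hfh⟩ := hf
  have hh' : ∀ s ∈ Ioc a b, IntervalIntegrable h volume a s := fun s hs =>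
    hh.mono_set (uIcc_subset_uIcc_left (Ioc_subset_Icc_self.trans Icc_subset_uIcc hs))
  have hprim : EqOn (rlInt a (1 - α) f) (fun s => ∫ u in a..s, rlDerivOfPrimitive a α (f a) h u)
      (Ioo a b) := fun s hs =>
    rlInt_one_sub_eq_integral_rlDerivOfPrimitive hα1 hs.1 (hh' s ⟨hs.1, hs.2.le⟩)
      fun τ hτ => hfh τ ⟨hτ.1.le, hτ.2.trans hs.2.le⟩
  have hg := intervalIntegrable_rlDerivOfPrimitive (c := f a) hα1 hab hh
  have hL0 : L = 0 := tendsto_nhds_unique hL (tendsto_nhdsGT_zero_of_eqOn_primitive hab hg hprim)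
  intro t ht
  have hD : rlInt a α (rlDeriv a α f) t = rlInt a α (rlDerivOfPrimitive a α (f a) h) t := by
    refine rlInt_congr_ae ht.1.le ?_
    filter_upwards [ae_deriv_eq_of_eqOn_primitive hg hprim] with s hs hst
    exact hs ⟨hst.1, hst.2.trans_lt ht.2⟩
  rw [hD, rlInt_rlDerivOfPrimitive hα0 hα1 ht.1 (hh' t ⟨ht.1, ht.2.le⟩),
    ← hfh t ⟨ht.1.le, ht.2.le⟩, hL0, zero_div, sub_zero]

/-- For `0 < α < 1`, `a < b`, `f` absolutely continuous on `[a,b]` with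
`I_a^{1-α} f` absolutely continuous and `L = lim_{t→a⁺} (I_a^{1-α} f)(t)`, we have
`(I_a^α (D_a^{RL,α} f))(t) = f(t) - L / (Γ(α)(t-a)^{1-α})` for all `t ∈ (a,b)`. -/
theorem rlInt_rlDeriv_eq (α a b L : ℝ) (hα0 : 0 < α) (hα1 : α < 1) (hab : a < b)
    (f : ℝ → ℝ) (hf : AbsContOn f a b)
    (hI : AbsContOn (rlInt a (1 - α) f) a b)
    (hL : Filter.Tendsto (rlInt a (1 - α) f) (nhdsWithin a (Set.Ioi a)) (nhds L)) :
    ∀ t ∈ Set.Ioo a b,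
      rlInt a α (rlDeriv a α f) t = f t - L / (Real.Gamma α * (t - a) ^ (1 - α)) :=
  rlInt_rlDeriv_eq_general α a b L hα0 hα1 hab f hf hL
end

section
/- Let a < b be real numbers and f ∈ L¹(a,b). Then for almost every t ∈ (a,b), the Riemann–Liouville fractional integral of f of order α converges to f(t) as α decreases to 0: lim_{α→0⁺} (1/Γ(α)) ∫_a^t (t-τ)^{α-1} f(τ) dτ = f(t). -/
open MeasureTheory Filter Topology Set

open scoped ENNReal

/-!
At a Lebesgue point `t` of `f`, split
`I_a^α f(t) = f(t) (t - a)^α / Γ(α + 1) + Γ(α)⁻¹ ∫_a^t (t - τ)^(α - 1) (f(τ) - f(t)) dτ`;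
the first term tends to `f(t)`. Choose `δ` with `∫_{t-r}^t |f - f(t)| ≤ ε r` for `r ≤ δ`.
On `(a, t - δ]` the kernel is at most `δ^(α - 1)`, so this part is `O(α)` after division by
`Γ(α) = Γ(α + 1) / α`. On `(t - δ, t)` the kernel is increasing, so its superlevel sets are
intervals ending at `t`, and the layer-cake formula bounds its integral against `|f - f(t)|` by
`ε ∫_{t-δ}^t (t - τ)^(α - 1) dτ = ε δ^α / α`; after division by `Γ(α)` this is about `ε`.
-/

section Kernel

variable {α : ℝ}

lemma intervalIntegrable_sub_rpow (hα : 0 < α) (a t : ℝ) :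
    IntervalIntegrable (fun τ => (t - τ) ^ (α - 1)) volume a t := by
  simpa using ((intervalIntegral.intervalIntegrable_rpow' (r := α - 1) (by linarith)
    (a := 0) (b := t - a)).comp_sub_left t).symm

lemma integral_sub_rpow (hα : 0 < α) (a t : ℝ) :
    ∫ τ in a..t, (t - τ) ^ (α - 1) = (t - a) ^ α / α := by
  rw [intervalIntegral.integral_comp_sub_left (fun s => s ^ (α - 1)), sub_self,
    integral_rpow (Or.inl (by linarith)), sub_add_cancel, Real.zero_rpow hα.ne', sub_zero]

lemma lintegral_Ioo_sub_rpow (hα : 0 < α) {δ : ℝ} (hδ : 0 ≤ δ) (t : ℝ) :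
    ∫⁻ τ in Ioo (t - δ) t, ENNReal.ofReal ((t - τ) ^ (α - 1)) = ENNReal.ofReal (δ ^ α / α) := by
  have hle : t - δ ≤ t := by linarith
  have hint := (intervalIntegrable_sub_rpow hα (t - δ) t).1
  have hnonneg : 0 ≤ᵐ[volume.restrict (Ioc (t - δ) t)] fun τ => (t - τ) ^ (α - 1) :=
    (ae_restrict_iff' measurableSet_Ioc).2 (ae_of_all _ fun τ hτ =>
      Real.rpow_nonneg (by linarith [hτ.2]) _)
  rw [setLIntegral_congr Ioo_ae_eq_Ioc, ← ofReal_integral_eq_lintegral_ofReal hint hnonneg,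
    ← intervalIntegral.integral_of_le hle, integral_sub_rpow hα, sub_sub_cancel]

end Kernel

lemma setLIntegral_le_mul_volume_of_Ioo_subset {h : ℝ → ℝ≥0∞} {c : ℝ≥0∞} {t δ : ℝ}
    (hh : ∀ r ∈ Ioc 0 δ, ∫⁻ τ in Icc (t - r) t, h τ ≤ c * ENNReal.ofReal r)
    {S : Set ℝ} (hS : S ⊆ Ioo (t - δ) t) (hSt : ∀ x ∈ S, Ioo x t ⊆ S) :
    ∫⁻ τ in S, h τ ≤ c * volume S := by
  rcases S.eq_empty_or_nonempty with rfl | hne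
  · simp
  have hbdd : BddBelow S := ⟨t - δ, fun x hx => (hS hx).1.le⟩
  set m := sInf S
  have hmS : Ioo m t ⊆ S := fun y hy => by
    obtain ⟨x, hxS, hxy⟩ := exists_lt_of_csInf_lt hne hy.1
    exact hSt x hxS ⟨hxy, hy.2⟩
  have hSm : S ⊆ Icc (t - (t - m)) t := fun x hx => by
    rw [sub_sub_cancel]
    exact ⟨csInf_le hbdd hx, (hS hx).2.le⟩
  have hm : t - m ∈ Ioc 0 δ := by
    obtain ⟨x, hx⟩ := hne
    constructor
    · linarith [csInf_le hbdd hx, (hS hx).2]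
    · linarith [le_csInf ⟨x, hx⟩ fun y hy => (hS hy).1.le]
  calc ∫⁻ τ in S, h τ ≤ ∫⁻ τ in Icc (t - (t - m)) t, h τ := lintegral_mono_set hSm
    _ ≤ c * ENNReal.ofReal (t - m) := hh _ hm
    _ = c * volume (Ioo m t) := by rw [Real.volume_Ioo]
    _ ≤ c * volume S := by gcongr

lemma lintegral_Ioo_mul_le_of_monotoneOn {k : ℝ → ℝ} {h : ℝ → ℝ≥0∞} {c : ℝ≥0∞} {t δ : ℝ}
    (hk : Measurable k) (hk0 : ∀ τ ∈ Ioo (t - δ) t, 0 ≤ k τ)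
    (hmono : MonotoneOn k (Ioo (t - δ) t)) (hhm : AEMeasurable h (volume.restrict (Ioo (t - δ) t)))
    (hh : ∀ r ∈ Ioc 0 δ, ∫⁻ τ in Icc (t - r) t, h τ ≤ c * ENNReal.ofReal r) :
    ∫⁻ τ in Ioo (t - δ) t, ENNReal.ofReal (k τ) * h τ ≤
      c * ∫⁻ τ in Ioo (t - δ) t, ENNReal.ofReal (k τ) := by
  set μ := volume.restrict (Ioo (t - δ) t)
  have hk0' : 0 ≤ᵐ[μ] k := (ae_restrict_iff' measurableSet_Ioo).2 (ae_of_all _ hk0)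
  have hlevel : ∀ u : ℝ, μ.withDensity h {τ | u < k τ} ≤ c * μ {τ | u < k τ} := by
    intro u
    have hmeas : MeasurableSet {τ | u < k τ} := measurableSet_lt measurable_const hk
    rw [withDensity_apply _ hmeas, Measure.restrict_apply hmeas, Measure.restrict_restrict hmeas]
    refine setLIntegral_le_mul_volume_of_Ioo_subset hh inter_subset_right ?_
    rintro x ⟨hx, hxI⟩ y hy
    have hyI : y ∈ Ioo (t - δ) t := ⟨hxI.1.trans hy.1, hy.2⟩
    exact ⟨hx.trans_le (hmono hxI hyI hy.1.le), hyI⟩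
  have hanti : Antitone fun u : ℝ => μ {τ | u < k τ} :=
    fun u v huv => measure_mono fun τ hτ => huv.trans_lt hτ
  calc ∫⁻ τ, ENNReal.ofReal (k τ) * h τ ∂μ
        = ∫⁻ τ, ENNReal.ofReal (k τ) ∂μ.withDensity h := by
          rw [lintegral_withDensity_eq_lintegral_mul₀ hhm hk.ennreal_ofReal.aemeasurable]
          simp only [Pi.mul_apply, mul_comm]
    _ = ∫⁻ u in Ioi 0, μ.withDensity h {τ | u < k τ} :=
        lintegral_eq_lintegral_meas_lt _
          (hk0'.filter_mono (withDensity_absolutelyContinuous μ h).ae_le) hk.aemeasurable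
    _ ≤ ∫⁻ u in Ioi 0, c * μ {τ | u < k τ} := lintegral_mono fun u => hlevel u
    _ = c * ∫⁻ u in Ioi 0, μ {τ | u < k τ} := lintegral_const_mul c hanti.measurable
    _ = c * ∫⁻ τ, ENNReal.ofReal (k τ) ∂μ := by
        rw [lintegral_eq_lintegral_meas_lt μ hk0' hk.aemeasurable]

lemma lintegral_Ioo_sub_rpow_mul_le {h : ℝ → ℝ≥0∞} {c : ℝ≥0∞} {a t δ α : ℝ}
    (hα : 0 < α) (hα1 : α ≤ 1) (hδ : 0 < δ) (hδt : a ≤ t - δ)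
    (hhm : AEMeasurable h (volume.restrict (Ioo a t)))
    (hh : ∀ r ∈ Ioc 0 δ, ∫⁻ τ in Icc (t - r) t, h τ ≤ c * ENNReal.ofReal r) :
    ∫⁻ τ in Ioo a t, ENNReal.ofReal ((t - τ) ^ (α - 1)) * h τ ≤
      ENNReal.ofReal (δ ^ (α - 1)) * (∫⁻ τ in Ioo a t, h τ) + c * ENNReal.ofReal (δ ^ α / α) := by
  have hsplit : Ioo a t = Ioc a (t - δ) ∪ Ioo (t - δ) t :=
    (Ioc_union_Ioo_eq_Ioo hδt (by linarith)).symm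
  have hfar : ∫⁻ τ in Ioc a (t - δ), ENNReal.ofReal ((t - τ) ^ (α - 1)) * h τ ≤
      ENNReal.ofReal (δ ^ (α - 1)) * ∫⁻ τ in Ioo a t, h τ :=
    calc _ ≤ ∫⁻ τ in Ioc a (t - δ), ENNReal.ofReal (δ ^ (α - 1)) * h τ :=
          setLIntegral_mono' measurableSet_Ioc fun τ hτ => by
            gcongr ?_ * _
            exact ENNReal.ofReal_le_ofReal
              (Real.rpow_le_rpow_of_nonpos hδ (by linarith [hτ.2]) (by linarith))
      _ = ENNReal.ofReal (δ ^ (α - 1)) * ∫⁻ τ in Ioc a (t - δ), h τ :=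
          lintegral_const_mul' _ _ ENNReal.ofReal_ne_top
      _ ≤ _ := by
          gcongr _ * ?_
          exact lintegral_mono_set (hsplit ▸ subset_union_left)
  have hnear : ∫⁻ τ in Ioo (t - δ) t, ENNReal.ofReal ((t - τ) ^ (α - 1)) * h τ ≤
      c * ENNReal.ofReal (δ ^ α / α) := by
    rw [← lintegral_Ioo_sub_rpow hα hδ.le t]
    have hsub : Ioo (t - δ) t ⊆ Ioo a t := hsplit ▸ subset_union_right
    refine lintegral_Ioo_mul_le_of_monotoneOn (by fun_prop)
      (fun τ hτ => Real.rpow_nonneg (by linarith [hτ.2]) _) ?_ (hhm.mono_set hsub) hh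
    intro x _ y hy hxy
    exact Real.rpow_le_rpow_of_nonpos (by linarith [hy.2]) (by linarith) (by linarith)
  nth_rw 1 [hsplit]
  rw [lintegral_union measurableSet_Ioo ((Ioc_disjoint_Ioi le_rfl).mono_right Ioo_subset_Ioi_self)]
  exact add_le_add hfar hnear

lemma abs_integral_sub_rpow_mul_sub_le {g : ℝ → ℝ} {a t δ α ε : ℝ}
    (hα : 0 < α) (hα1 : α ≤ 1) (hδ : 0 < δ) (hδt : a ≤ t - δ) (hε : 0 ≤ ε)
    (hg : IntegrableOn g (Ioo a t))
    (hH : ∀ r ∈ Ioc 0 δ,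
      ∫⁻ τ in Icc (t - r) t, ‖g τ - g t‖ₑ ≤ ENNReal.ofReal ε * ENNReal.ofReal r) :
    IntervalIntegrable (fun τ => (t - τ) ^ (α - 1) * (g τ - g t)) volume a t ∧
      |∫ τ in a..t, (t - τ) ^ (α - 1) * (g τ - g t)| ≤
        δ ^ (α - 1) * (∫ τ in Ioo a t, ‖g τ - g t‖) + ε * (δ ^ α / α) := by
  have hat : a ≤ t := by linarith
  have hgt : IntegrableOn (fun τ => g τ - g t) (Ioo a t) := hg.sub (integrableOn_const (by simp))
  set B := δ ^ (α - 1) * (∫ τ in Ioo a t, ‖g τ - g t‖) + ε * (δ ^ α / α)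
  have hB : 0 ≤ B := by positivity
  have hlin : ∫⁻ τ in Ioo a t, ‖(t - τ) ^ (α - 1) * (g τ - g t)‖ₑ ≤ ENNReal.ofReal B :=
    calc ∫⁻ τ in Ioo a t, ‖(t - τ) ^ (α - 1) * (g τ - g t)‖ₑ
          = ∫⁻ τ in Ioo a t, ENNReal.ofReal ((t - τ) ^ (α - 1)) * ‖g τ - g t‖ₑ :=
          setLIntegral_congr_fun measurableSet_Ioo fun τ hτ => by
            rw [enorm_mul, Real.enorm_of_nonneg (Real.rpow_nonneg (by linarith [hτ.2]) _)]
      _ ≤ ENNReal.ofReal (δ ^ (α - 1)) * (∫⁻ τ in Ioo a t, ‖g τ - g t‖ₑ) +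
            ENNReal.ofReal ε * ENNReal.ofReal (δ ^ α / α) :=
          lintegral_Ioo_sub_rpow_mul_le hα hα1 hδ hδt hgt.1.enorm hH
      _ = ENNReal.ofReal B := by
          rw [← ofReal_integral_norm_eq_lintegral_enorm hgt, ← ENNReal.ofReal_mul (by positivity),
            ← ENNReal.ofReal_mul hε, ← ENNReal.ofReal_add (by positivity) (by positivity)]
  have hint : IntegrableOn (fun τ => (t - τ) ^ (α - 1) * (g τ - g t)) (Ioo a t) :=
    ⟨(by fun_prop : Measurable fun τ : ℝ => (t - τ) ^ (α - 1)).aestronglyMeasurable.mul hgt.1,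
      hlin.trans_lt ENNReal.ofReal_lt_top⟩
  refine ⟨(intervalIntegrable_iff_integrableOn_Ioo_of_le hat).2 hint, ?_⟩
  rw [intervalIntegral.integral_of_le hat, integral_Ioc_eq_integral_Ioo, ← Real.norm_eq_abs,
    ← ENNReal.ofReal_le_ofReal_iff hB, ofReal_norm]
  exact (enorm_integral_le_lintegral_enorm _).trans hlin

lemma continuousAt_Gamma_add_one : ContinuousAt (fun α : ℝ => Real.Gamma (α + 1)) 0 := by
  have hΓ : ContinuousAt Real.Gamma (0 + 1) :=
    (Real.differentiableAt_Gamma fun m => by linarith [(m.cast_nonneg : (0 : ℝ) ≤ m)]).continuousAt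
  exact hΓ.comp (f := fun α : ℝ => α + 1) (by fun_prop)

def IsLebesguePoint (g : ℝ → ℝ) (t : ℝ) : Prop :=
  Tendsto (fun r => (∫⁻ y in Metric.closedBall t r, ‖g y - g t‖ₑ) / volume (Metric.closedBall t r))
    (𝓝[>] 0) (𝓝 0)

lemma IsLebesguePoint.eventually_lintegral_Icc_enorm_sub_le {g : ℝ → ℝ} {t : ℝ}
    (hleb : IsLebesguePoint g t) {ε : ℝ} (hε : 0 < ε) :
    ∀ᶠ r in 𝓝[>] 0,
      ∫⁻ τ in Icc (t - r) t, ‖g τ - g t‖ₑ ≤ ENNReal.ofReal ε * ENNReal.ofReal r := by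
  filter_upwards [Tendsto.eventually_lt_const (ENNReal.ofReal_pos.2 (half_pos hε)) hleb,
    self_mem_nhdsWithin] with r hr (hr0 : 0 < r)
  rw [Real.volume_closedBall, ENNReal.div_lt_iff (Or.inl (by simpa using hr0))
    (Or.inl ENNReal.ofReal_ne_top)] at hr
  calc ∫⁻ τ in Icc (t - r) t, ‖g τ - g t‖ₑ
      ≤ ∫⁻ τ in Metric.closedBall t r, ‖g τ - g t‖ₑ := by
        rw [Real.closedBall_eq_Icc]
        exact lintegral_mono_set (Icc_subset_Icc_right (by linarith))
    _ ≤ ENNReal.ofReal (ε / 2) * ENNReal.ofReal (2 * r) := hr.le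
    _ = ENNReal.ofReal ε * ENNReal.ofReal r := by
        rw [← ENNReal.ofReal_mul (by positivity), ← ENNReal.ofReal_mul hε.le]
        ring_nf

lemma rlInt_sub_mul_eq {g : ℝ → ℝ} {a t α : ℝ} (hα : 0 < α)
    (hint : IntervalIntegrable (fun τ => (t - τ) ^ (α - 1) * (g τ - g t)) volume a t) :
    rlInt a α g t - g t * ((t - a) ^ α / Real.Gamma (α + 1)) =
      (∫ τ in a..t, (t - τ) ^ (α - 1) * (g τ - g t)) / Real.Gamma α := by
  have hΓ : Real.Gamma α ≠ 0 := (Real.Gamma_pos_of_pos hα).ne'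
  have hsplit : ∫ τ in a..t, (t - τ) ^ (α - 1) * g τ =
      (∫ τ in a..t, (t - τ) ^ (α - 1) * (g τ - g t)) + (∫ τ in a..t, (t - τ) ^ (α - 1)) * g t := by
    rw [← intervalIntegral.integral_mul_const, ← intervalIntegral.integral_add hint
      ((intervalIntegrable_sub_rpow hα a t).mul_const _)]
    congr 1 with τ
    ring
  rw [rlInt, hsplit, integral_sub_rpow hα, Real.Gamma_add_one hα.ne']
  field_simp
  ring

theorem IsLebesguePoint.tendsto_rlInt_sub_mul {g : ℝ → ℝ} {a t : ℝ} (hleb : IsLebesguePoint g t)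
    (hat : a < t) (hg : IntegrableOn g (Ioo a t)) :
    Tendsto (fun α => rlInt a α g t - g t * ((t - a) ^ α / Real.Gamma (α + 1))) (𝓝[>] 0) (𝓝 0) := by
  rw [Metric.tendsto_nhds]
  intro ε hε
  obtain ⟨δ₀, hδ₀, hδ₀H⟩ := mem_nhdsGT_iff_exists_Ioo_subset.1
    (hleb.eventually_lintegral_Icc_enorm_sub_le (half_pos hε))
  set δ := min (δ₀ / 2) (t - a)
  have hδ : 0 < δ := lt_min (by linarith [mem_Ioi.1 hδ₀]) (by linarith)
  have hH : ∀ r ∈ Ioc 0 δ, ∫⁻ τ in Icc (t - r) t, ‖g τ - g t‖ₑ ≤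
      ENNReal.ofReal (ε / 2) * ENNReal.ofReal r := fun r hr =>
    hδ₀H ⟨hr.1, by linarith [hr.2.trans (min_le_left _ _), mem_Ioi.1 hδ₀]⟩
  set A := ∫ τ in Ioo a t, ‖g τ - g t‖
  set w := fun α : ℝ => (α * δ ^ (α - 1) * A + ε / 2 * δ ^ α) / Real.Gamma (α + 1)
  have hw : ContinuousAt w 0 := by
    have hpow := Real.continuous_const_rpow hδ.ne'
    exact ContinuousAt.div (by fun_prop) continuousAt_Gamma_add_one (by simp)
  have hw0 : w 0 = ε / 2 := by simp [w]
  have hwε : ∀ᶠ α in 𝓝[>] 0, w α < ε :=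
    (hw.tendsto.mono_left nhdsWithin_le_nhds).eventually_lt_const (by linarith)
  filter_upwards [hwε, Ioc_mem_nhdsGT one_pos] with α hwα hα
  obtain ⟨hint, hbound⟩ := abs_integral_sub_rpow_mul_sub_le hα.1 hα.2 hδ
    (by linarith [min_le_right (δ₀ / 2) (t - a)]) (half_pos hε).le hg hH
  have hΓ := Real.Gamma_pos_of_pos hα.1
  rw [Real.dist_eq, sub_zero, rlInt_sub_mul_eq hα.1 hint, abs_div, abs_of_pos hΓ]
  calc _ ≤ (δ ^ (α - 1) * A + ε / 2 * (δ ^ α / α)) / Real.Gamma α := by gcongr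
    _ = w α := by
        have hα0 := hα.1.ne'
        simp only [w, Real.Gamma_add_one hα0]
        field_simp
    _ < ε := hwα

theorem IsLebesguePoint.tendsto_rlInt {g : ℝ → ℝ} {a t : ℝ} (hleb : IsLebesguePoint g t)
    (hat : a < t) (hg : IntegrableOn g (Ioo a t)) :
    Tendsto (fun α => rlInt a α g t) (𝓝[>] 0) (𝓝 (g t)) := by
  have hmain : Tendsto (fun α => g t * ((t - a) ^ α / Real.Gamma (α + 1))) (𝓝[>] 0) (𝓝 (g t)) := by
    have hpow := Real.continuous_const_rpow (sub_pos.2 hat).ne'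
    have hcont : ContinuousAt (fun α => g t * ((t - a) ^ α / Real.Gamma (α + 1))) 0 :=
      ContinuousAt.mul (by fun_prop) (ContinuousAt.div (by fun_prop) continuousAt_Gamma_add_one
        (by simp))
    simpa using hcont.tendsto.mono_left nhdsWithin_le_nhds
  simpa using (hleb.tendsto_rlInt_sub_mul hat hg).add hmain

lemma rlInt_congr {f g : ℝ → ℝ} {a t : ℝ} (hat : a ≤ t) (h : EqOn f g (Ioc a t)) (α : ℝ) :
    rlInt a α f t = rlInt a α g t := by
  refine congrArg _ (intervalIntegral.integral_congr_ae (ae_of_all _ fun τ hτ => ?_))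
  rw [uIoc_of_le hat] at hτ
  rw [h hτ]

theorem rlInt_tendsto_self_general (a b : ℝ) (f : ℝ → ℝ)
    (hf : IntervalIntegrable f MeasureTheory.volume a b) :
    ∀ᵐ t ∂(MeasureTheory.volume.restrict (Set.Ioo a b)),
      Filter.Tendsto (fun α : ℝ => rlInt a α f t)
        (nhdsWithin 0 (Set.Ioi 0)) (nhds (f t)) := by
  set F := (Ioo a b).indicator f
  have hF : Integrable F := (integrable_indicator_iff measurableSet_Ioo).2
    (hf.def'.mono_set (Ioo_subset_Ioc_self.trans Ioc_subset_uIoc))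
  have hleb := (Besicovitch.vitaliFamily (volume : Measure ℝ)).ae_tendsto_lintegral_enorm_sub_div
    hF.locallyIntegrable
  filter_upwards [ae_restrict_of_ae hleb, ae_restrict_mem measurableSet_Ioo] with t hlebt ht
  have hFf : EqOn F f (Ioc a t) := fun τ hτ =>
    indicator_of_mem (show τ ∈ Ioo a b from ⟨hτ.1, hτ.2.trans_lt ht.2⟩) f
  have hlebF : IsLebesguePoint F t := hlebt.comp (Besicovitch.tendsto_filterAt volume t)
  have hlim := hlebF.tendsto_rlInt ht.1 hF.integrableOn
  simpa only [rlInt_congr ht.1.le hFf, F, indicator_of_mem ht] using hlim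

/-- For `f ∈ L¹(a,b)`, for a.e. `t ∈ (a,b)` the Riemann–Liouville
fractional integral converges to `f(t)` as the order decreases to `0`:
`(I_a^α f)(t) → f(t)` as `α → 0⁺`. -/
theorem rlInt_tendsto_self (a b : ℝ) (hab : a < b) (f : ℝ → ℝ)
    (hf : IntervalIntegrable f MeasureTheory.volume a b) :
    ∀ᵐ t ∂(MeasureTheory.volume.restrict (Set.Ioo a b)),
      Filter.Tendsto (fun α : ℝ => rlInt a α f t)
        (nhdsWithin 0 (Set.Ioi 0)) (nhds (f t)) :=
  rlInt_tendsto_self_general a b f hf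
end

section
/- Let a < b be real numbers and let f : [a,b] → ℝ be continuously differentiable. Then for every t ∈ (a,b), the Caputo fractional derivative of f of order α converges to f'(t) as α increases to 1: lim_{α→1⁻} (1/Γ(1-α)) ∫_a^t (t-τ)^{-α} f'(τ) dτ = f'(t). -/
open MeasureTheory Filter Topology Set

/-! On `[a, t]` the kernel `(1 - α) (t - τ) ^ (-α)` has total mass `(t - a) ^ (1 - α) → 1` as
`α → 1⁻`, while outside a `δ`-neighbourhood of `t` it is at most `(1 - α) δ ^ (-α) → 0`: it is an
approximate identity concentrating at `τ = t`. Since `1 / Γ(1 - α) = (1 - α) / Γ(2 - α)` and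
`Γ(2 - α) → Γ(1) = 1`, the Caputo derivative of order `α` therefore tends to `f' t`. -/

theorem one_div_Gamma_eq_self_div_Gamma_add_one (s : ℝ) :
    1 / Real.Gamma s = s / Real.Gamma (s + 1) := by
  rcases eq_or_ne s 0 with rfl | hs
  · simp [Real.Gamma_zero]
  · rw [Real.Gamma_add_one hs, div_mul_cancel_left₀ hs, one_div]

theorem intervalIntegrable_sub_rpow_neg {α : ℝ} (hα : α < 1) (t c d : ℝ) :
    IntervalIntegrable (fun τ => (t - τ) ^ (-α)) volume c d := by
  simpa using (intervalIntegral.intervalIntegrable_rpow' (a := t - c) (b := t - d)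
    (by linarith : -1 < -α)).comp_sub_left t

theorem integral_sub_rpow_neg {α : ℝ} (hα : α < 1) (t c : ℝ) :
    ∫ τ in c..t, (t - τ) ^ (-α) = (t - c) ^ (1 - α) / (1 - α) := by
  rw [intervalIntegral.integral_comp_sub_left (fun x : ℝ => x ^ (-α)) t, sub_self,
    integral_rpow (Or.inl (by linarith)), Real.zero_rpow (by linarith), neg_add_eq_sub, sub_zero]

theorem norm_sub_rpow_neg_mul_le {α δ ε M t τ : ℝ} {g : ℝ → ℝ} (hα : 0 ≤ α) (hδ : 0 < δ)
    (hε : 0 ≤ ε) (hτ : τ ≤ t) (hM : ‖g τ‖ ≤ M) (hnear : t - τ < δ → ‖g τ‖ ≤ ε) :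
    ‖(t - τ) ^ (-α) * g τ‖ ≤ ε * (t - τ) ^ (-α) + δ ^ (-α) * M := by
  have hpow : 0 ≤ (t - τ) ^ (-α) := Real.rpow_nonneg (by linarith) _
  rw [norm_mul, Real.norm_of_nonneg hpow]
  rcases lt_or_ge (t - τ) δ with hclose | hfar
  · have := mul_le_mul_of_nonneg_left (hnear hclose) hpow
    have : 0 ≤ δ ^ (-α) * M := mul_nonneg (Real.rpow_nonneg hδ.le _) ((norm_nonneg _).trans hM)
    nlinarith
  · have := mul_le_mul (Real.rpow_le_rpow_of_nonpos hδ hfar (neg_nonpos.2 hα)) hM (norm_nonneg _)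
      (Real.rpow_nonneg hδ.le _)
    nlinarith

theorem norm_one_sub_mul_integral_sub_rpow_neg_mul_le {α δ ε M a t : ℝ} {g : ℝ → ℝ}
    (hα : α ∈ Ioo 0 1) (hδ : 0 < δ) (hε : 0 ≤ ε) (hat : a ≤ t)
    (hM : ∀ τ ∈ Icc a t, ‖g τ‖ ≤ M) (hnear : ∀ τ ∈ Icc a t, t - τ < δ → ‖g τ‖ ≤ ε) :
    ‖(1 - α) * ∫ τ in a..t, (t - τ) ^ (-α) * g τ‖
      ≤ ε * (t - a) ^ (1 - α) + (1 - α) * δ ^ (-α) * M * (t - a) := by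
  have hkernel := intervalIntegrable_sub_rpow_neg hα.2 t a t
  have hbound : ‖∫ τ in a..t, (t - τ) ^ (-α) * g τ‖
      ≤ ∫ τ in a..t, (ε * (t - τ) ^ (-α) + δ ^ (-α) * M) :=
    intervalIntegral.norm_integral_le_of_norm_le hat
      (ae_of_all _ fun τ hτ => norm_sub_rpow_neg_mul_le hα.1.le hδ hε hτ.2
        (hM τ (Ioc_subset_Icc_self hτ)) (hnear τ (Ioc_subset_Icc_self hτ)))
      ((hkernel.const_mul ε).add intervalIntegrable_const)
  have hvalue : ∫ τ in a..t, (ε * (t - τ) ^ (-α) + δ ^ (-α) * M)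
      = ε * ((t - a) ^ (1 - α) / (1 - α)) + δ ^ (-α) * M * (t - a) := by
    rw [intervalIntegral.integral_add (hkernel.const_mul ε) intervalIntegrable_const,
      intervalIntegral.integral_const_mul, integral_sub_rpow_neg hα.2,
      intervalIntegral.integral_const, smul_eq_mul, mul_comm (t - a)]
  have h1α : 0 < 1 - α := sub_pos.2 hα.2
  calc ‖(1 - α) * ∫ τ in a..t, (t - τ) ^ (-α) * g τ‖
      = (1 - α) * ‖∫ τ in a..t, (t - τ) ^ (-α) * g τ‖ := by
        rw [norm_mul, Real.norm_of_nonneg h1α.le]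
    _ ≤ (1 - α) * (ε * ((t - a) ^ (1 - α) / (1 - α)) + δ ^ (-α) * M * (t - a)) := by
        rw [← hvalue]; gcongr
    _ = ε * (t - a) ^ (1 - α) + (1 - α) * δ ^ (-α) * M * (t - a) := by
        field_simp

theorem tendsto_one_sub_mul_integral_sub_rpow_neg_mul_of_eq_zero {a t : ℝ} {g : ℝ → ℝ}
    (hat : a < t) (hg : ContinuousOn g (Icc a t)) (hgt : g t = 0) :
    Tendsto (fun α => (1 - α) * ∫ τ in a..t, (t - τ) ^ (-α) * g τ) (𝓝[<] 1) (𝓝 0) := by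
  refine Metric.tendsto_nhds.2 fun ε hε => ?_
  obtain ⟨M, hM⟩ := isCompact_Icc.exists_bound_of_continuousOn hg
  obtain ⟨δ, hδ, hcont⟩ := Metric.continuousWithinAt_iff.1
    (hg.continuousWithinAt ⟨hat.le, le_rfl⟩) (ε / 2) (half_pos hε)
  have hnear : ∀ τ ∈ Icc a t, t - τ < δ → ‖g τ‖ ≤ ε / 2 := fun τ hτ hτδ => by
    have := hcont hτ (by rwa [Real.dist_eq, abs_sub_comm, abs_of_nonneg (by linarith [hτ.2])])
    rw [dist_eq_norm, hgt, sub_zero] at this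
    exact this.le
  have hbound : Tendsto (fun α => ε / 2 * (t - a) ^ (1 - α) + (1 - α) * δ ^ (-α) * M * (t - a))
      (𝓝[<] 1) (𝓝 (ε / 2)) := by
    have hta : 0 < t - a := sub_pos.2 hat
    have hc : ContinuousAt
        (fun α : ℝ => ε / 2 * (t - a) ^ (1 - α) + (1 - α) * δ ^ (-α) * M * (t - a)) 1 := by
      fun_prop (disch := positivity)
    simpa using hc.tendsto.mono_left nhdsWithin_le_nhds
  filter_upwards [hbound.eventually (gt_mem_nhds (half_lt_self hε)),
    Ioo_mem_nhdsLT zero_lt_one] with α hα hα01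
  rw [dist_zero_right]
  exact (norm_one_sub_mul_integral_sub_rpow_neg_mul_le hα01 hδ (half_pos hε).le hat.le hM
    hnear).trans_lt hα

theorem tendsto_one_sub_mul_integral_sub_rpow_neg_mul {a t : ℝ} {g : ℝ → ℝ}
    (hat : a < t) (hg : ContinuousOn g (Icc a t)) :
    Tendsto (fun α => (1 - α) * ∫ τ in a..t, (t - τ) ^ (-α) * g τ) (𝓝[<] 1) (𝓝 (g t)) := by
  have hsplit : ∀ α < 1, (1 - α) * (∫ τ in a..t, (t - τ) ^ (-α) * (g τ - g t))
      + g t * (t - a) ^ (1 - α) = (1 - α) * ∫ τ in a..t, (t - τ) ^ (-α) * g τ := by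
    intro α hα
    have hkernel := intervalIntegrable_sub_rpow_neg hα t a t
    simp only [mul_sub]
    rw [intervalIntegral.integral_sub
        (hkernel.mul_continuousOn (hg.mono (uIcc_of_le hat.le).subset)) (hkernel.mul_const _),
      intervalIntegral.integral_mul_const, integral_sub_rpow_neg hα]
    field_simp [(sub_pos.2 hα).ne']
    ring
  have hvanish := tendsto_one_sub_mul_integral_sub_rpow_neg_mul_of_eq_zero hat
    (hg.sub continuousOn_const) (sub_self (g t))
  have hmass : Tendsto (fun α : ℝ => (t - a) ^ (1 - α)) (𝓝[<] 1) (𝓝 1) := by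
    have hta : 0 < t - a := sub_pos.2 hat
    have hc : ContinuousAt (fun α : ℝ => (t - a) ^ (1 - α)) 1 := by
      fun_prop (disch := positivity)
    simpa using hc.tendsto.mono_left nhdsWithin_le_nhds
  simpa using (hvanish.add (hmass.const_mul (g t))).congr'
    (eventually_nhdsWithin_of_forall (s := Iio 1) hsplit)

theorem tendsto_one_div_Gamma_mul_integral_sub_rpow_neg_mul {a t : ℝ} {g : ℝ → ℝ}
    (hat : a < t) (hg : ContinuousOn g (Icc a t)) :
    Tendsto (fun α => 1 / Real.Gamma (1 - α) * ∫ τ in a..t, (t - τ) ^ (-α) * g τ)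
      (𝓝[<] 1) (𝓝 (g t)) := by
  have hGamma : Tendsto (fun α : ℝ => 1 / Real.Gamma (2 - α)) (𝓝[<] 1) (𝓝 1) := by
    have hΓ : ContinuousAt Real.Gamma 1 :=
      Real.differentiableOn_Gamma_Ioi.continuousOn.continuousAt (Ioi_mem_nhds one_pos)
    have hc : ContinuousAt (fun α : ℝ => 1 / Real.Gamma (2 - α)) 1 :=
      continuousAt_const.div (hΓ.comp_of_eq (by fun_prop) (by norm_num))
        (by norm_num [Real.Gamma_one])
    have := hc.tendsto.mono_left (nhdsWithin_le_nhds (s := Iio 1))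
    norm_num [Real.Gamma_one] at this ⊢
    exact this
  refine Tendsto.congr (fun α => ?_)
    (by simpa using hGamma.mul (tendsto_one_sub_mul_integral_sub_rpow_neg_mul hat hg))
  rw [one_div_Gamma_eq_self_div_Gamma_add_one, show 1 - α + 1 = 2 - α by ring]
  ring

theorem caputo_tendsto_deriv_general (a b : ℝ) (f' : ℝ → ℝ)
    (hcont : ContinuousOn f' (Set.Icc a b)) :
    ∀ t ∈ Set.Ioo a b,
      Filter.Tendsto
        (fun α : ℝ => (1 / Real.Gamma (1 - α)) * ∫ τ in a..t, (t - τ) ^ (-α) * f' τ)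
        (nhdsWithin 1 (Set.Ioo (0:ℝ) 1)) (nhds (f' t)) := by
  intro t ⟨hat, htb⟩
  exact (tendsto_one_div_Gamma_mul_integral_sub_rpow_neg_mul hat
    (hcont.mono (Icc_subset_Icc_right htb.le))).mono_left (nhdsWithin_mono _ Ioo_subset_Iio_self)

/-- For `f` continuously differentiable on `[a,b]` (with derivative `f'`),
for every `t ∈ (a,b)` the Caputo derivative of order `α` converges to `f'(t)` as
`α → 1⁻`: `(1/Γ(1-α)) ∫_a^t (t-τ)^{-α} f'(τ) dτ → f'(t)`. -/
theorem caputo_tendsto_deriv (a b : ℝ) (hab : a < b) (f f' : ℝ → ℝ)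
    (hderiv : ∀ t ∈ Set.Icc a b, HasDerivWithinAt f (f' t) (Set.Icc a b) t)
    (hcont : ContinuousOn f' (Set.Icc a b)) :
    ∀ t ∈ Set.Ioo a b,
      Filter.Tendsto
        (fun α : ℝ => (1 / Real.Gamma (1 - α)) * ∫ τ in a..t, (t - τ) ^ (-α) * f' τ)
        (nhdsWithin 1 (Set.Ioo (0:ℝ) 1)) (nhds (f' t)) :=
  caputo_tendsto_deriv_general a b f' hcont
end

section
/- Let ρ > -1 and β ∈ ℝ. Then the Wright function x ↦ W(x, ρ, β) = ∑_{k=0}^∞ x^k/(k! Γ(ρk+β)) is differentiable on ℝ and its derivative satisfies (d/dx) W(x, ρ, β) = W(x, ρ, ρ+β) for every x ∈ ℝ. -/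
/-!
The `k + 1`-st term of the Wright series differentiates to the `k`-th term of `W(·, ρ, ρ + β)`,
so everything rests on the local uniform majorant: `∑ R^k / (k! |Γ(ρk + β)|) < ∞` for every `R`.
For `ρ ≥ 0` the factor `1 / |Γ(ρk + β)|` is eventually bounded. For `-1 < ρ < 0` the reflection
formula gives `1 / |Γ z| ≤ Γ(1 - z) / π`, and log-convexity of `Γ` bounds `Γ(-ρk + c)` by
`C (k!)^(-ρ)`; the terms are then dominated by `C R^k / (k!)^(1 + ρ)`, summable by the ratio test.
-/

open MeasureTheory Filter Topology Set

open Real Nat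

namespace Real

theorem inv_abs_Gamma_le_Gamma_one_sub_div_pi {z : ℝ} (hz : z < 1) :
    |Gamma z|⁻¹ ≤ Gamma (1 - z) / π := by
  have hΓ : 0 < Gamma (1 - z) := Gamma_pos_of_pos (by linarith)
  have hrefl := Gamma_mul_Gamma_one_sub z
  rcases eq_or_ne (sin (π * z)) 0 with hsin | hsin
  · rw [hsin, div_zero] at hrefl
    rw [(mul_eq_zero.1 hrefl).resolve_right hΓ.ne', abs_zero, inv_zero]
    positivity
  · have hΓz : Gamma z ≠ 0 := by
      rintro h
      rw [h, zero_mul] at hrefl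
      exact div_ne_zero pi_ne_zero hsin hrefl.symm
    have hinv : |Gamma z|⁻¹ = Gamma (1 - z) * |sin (π * z)| / π := by
      have habs : |Gamma z| * Gamma (1 - z) = π / |sin (π * z)| := by
        rw [← abs_of_pos hΓ, ← abs_mul, hrefl, abs_div, abs_of_pos pi_pos]
      field_simp
      rw [habs]
      field_simp
    rw [hinv]
    gcongr
    exact mul_le_of_le_one_right hΓ.le (abs_sin_le_one _)

end Real

theorem summable_pow_div_factorial_rpow (x : ℝ) {b : ℝ} (hb : 0 < b) :
    Summable fun k : ℕ => x ^ k / (k ! : ℝ) ^ b := by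
  have hratio : Tendsto (fun k : ℕ => |x| / ((k : ℝ) + 1) ^ b) atTop (𝓝 0) :=
    tendsto_const_nhds.div_atTop <| (tendsto_rpow_atTop hb).comp <|
      tendsto_atTop_add_const_right _ 1 tendsto_natCast_atTop_atTop
  refine summable_of_ratio_norm_eventually_le (r := 1 / 2) (by norm_num) ?_
  filter_upwards [hratio.eventually_le_const (by norm_num : (0 : ℝ) < 1 / 2)] with k hk
  have hfact : ((k + 1) ! : ℝ) ^ b = ((k : ℝ) + 1) ^ b * (k ! : ℝ) ^ b := by
    rw [factorial_succ, cast_mul, mul_rpow (by positivity) (by positivity)]; push_cast; ring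
  calc ‖x ^ (k + 1) / ((k + 1) ! : ℝ) ^ b‖
      = |x| / ((k : ℝ) + 1) ^ b * ‖x ^ k / (k ! : ℝ) ^ b‖ := by
        rw [hfact, norm_div, norm_div, norm_pow, norm_pow, Real.norm_eq_abs,
          Real.norm_of_nonneg (by positivity), Real.norm_of_nonneg (by positivity), pow_succ]
        ring
    _ ≤ 1 / 2 * ‖x ^ k / (k ! : ℝ) ^ b‖ := by gcongr

theorem exists_inv_abs_Gamma_le_of_nonneg {ρ : ℝ} (hρ : 0 ≤ ρ) (β : ℝ) :
    ∃ C, ∀ᶠ k : ℕ in atTop, |Gamma (ρ * k + β)|⁻¹ ≤ C := by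
  rcases hρ.eq_or_lt with rfl | hρ
  · exact ⟨|Gamma β|⁻¹, by simp⟩
  refine ⟨1, ?_⟩
  have harg : Tendsto (fun k : ℕ => ρ * k + β) atTop atTop :=
    tendsto_atTop_add_const_right _ β <| tendsto_natCast_atTop_atTop.const_mul_atTop hρ
  filter_upwards [harg.eventually_ge_atTop 2] with k hk
  have h1 : 1 ≤ Gamma (ρ * k + β) := by
    simpa only [Gamma_two] using
      Gamma_strictMonoOn_Ici.monotoneOn (mem_Ici.2 le_rfl : (2 : ℝ) ∈ Ici 2) hk hk
  rw [abs_of_pos (by linarith)]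
  exact inv_le_one_of_one_le₀ h1

theorem exists_inv_abs_Gamma_le_factorial_rpow_of_neg {ρ : ℝ} (hρ₁ : -1 < ρ) (hρ₀ : ρ < 0)
    (β : ℝ) : ∃ C, ∀ᶠ k : ℕ in atTop, |Gamma (ρ * k + β)|⁻¹ ≤ C * (k ! : ℝ) ^ (-ρ) := by
  set a := -ρ
  have ha₀ : 0 < a := by linarith
  have ha₁ : 0 < 1 - a := by linarith
  -- `t` is chosen so that `a * (k + 1) + (1 - a) * t ≥ a * k + 1 - β`
  set t := 1 + |β| / (1 - a)
  have ht : 0 < t := by positivity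
  refine ⟨Gamma t ^ (1 - a) / π, ?_⟩
  have harg : Tendsto (fun k : ℕ => a * k + (1 - β)) atTop atTop :=
    tendsto_atTop_add_const_right _ _ <| tendsto_natCast_atTop_atTop.const_mul_atTop ha₀
  filter_upwards [harg.eventually_ge_atTop 2] with k hk
  have hsub : 1 - (ρ * k + β) = a * k + (1 - β) := by ring
  have hshift : a * k + (1 - β) ≤ a * (k + 1) + (1 - a) * t := by
    have : (1 - a) * t = (1 - a) + |β| := by simp only [t]; field_simp
    rw [this]; linarith [neg_abs_le β]
  have hconv : Gamma (a * (k + 1) + (1 - a) * t) ≤ (k ! : ℝ) ^ a * Gamma t ^ (1 - a) := by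
    simpa only [Gamma_nat_eq_factorial] using
      Gamma_mul_add_mul_le_rpow_Gamma_mul_rpow_Gamma (s := k + 1) (by positivity) ht ha₀ ha₁
        (by ring)
  calc |Gamma (ρ * k + β)|⁻¹
      ≤ Gamma (a * k + (1 - β)) / π := by
        rw [← hsub]; exact inv_abs_Gamma_le_Gamma_one_sub_div_pi (by linarith)
    _ ≤ Gamma (a * (k + 1) + (1 - a) * t) / π := by
        gcongr
        exact Gamma_strictMonoOn_Ici.monotoneOn hk (le_trans hk hshift) hshift
    _ ≤ (k ! : ℝ) ^ a * Gamma t ^ (1 - a) / π := by gcongr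
    _ = Gamma t ^ (1 - a) / π * (k ! : ℝ) ^ a := by ring

theorem exists_inv_abs_Gamma_le_factorial_rpow {ρ : ℝ} (hρ : -1 < ρ) (β : ℝ) :
    ∃ C, ∀ᶠ k : ℕ in atTop, |Gamma (ρ * k + β)|⁻¹ ≤ C * (k ! : ℝ) ^ max (-ρ) 0 := by
  rcases lt_or_ge ρ 0 with hρ₀ | hρ₀
  · simpa only [max_eq_left (neg_nonneg.2 hρ₀.le)] using
      exists_inv_abs_Gamma_le_factorial_rpow_of_neg hρ hρ₀ β
  · simpa only [max_eq_right (neg_nonpos.2 hρ₀), rpow_zero, mul_one] using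
      exists_inv_abs_Gamma_le_of_nonneg hρ₀ β

noncomputable def wrightTerm (ρ β : ℝ) (k : ℕ) (x : ℝ) : ℝ :=
  x ^ k / (k ! * Gamma (ρ * k + β))

theorem wright_eq_tsum_wrightTerm (x ρ β : ℝ) : wright x ρ β = ∑' k, wrightTerm ρ β k x := rfl

theorem summable_norm_wrightTerm {ρ : ℝ} (hρ : -1 < ρ) (β x : ℝ) :
    Summable fun k => ‖wrightTerm ρ β k x‖ := by
  set a := max (-ρ) 0
  obtain ⟨C, hC⟩ := exists_inv_abs_Gamma_le_factorial_rpow hρ β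
  have hb : 0 < 1 - a := by simp only [a, sub_pos, max_lt_iff]; constructor <;> linarith
  refine .of_norm_bounded_eventually_nat ((summable_pow_div_factorial_rpow |x| hb).mul_left C) ?_
  filter_upwards [hC] with k hk
  have hfact : (0 : ℝ) < k ! := by positivity
  calc ‖‖wrightTerm ρ β k x‖‖
      = |x| ^ k / k ! * |Gamma (ρ * k + β)|⁻¹ := by
        rw [norm_norm, wrightTerm, norm_div, norm_mul, norm_pow, Real.norm_eq_abs,
          Real.norm_eq_abs, Real.norm_eq_abs, abs_of_pos hfact, div_mul_eq_div_div, div_eq_mul_inv]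
    _ ≤ |x| ^ k / k ! * (C * (k ! : ℝ) ^ a) := by gcongr
    _ = C * (|x| ^ k / (k ! : ℝ) ^ (1 - a)) := by
        rw [rpow_sub hfact, rpow_one]; field_simp

theorem norm_wrightTerm_le {ρ β x y : ℝ} (hxy : |x| ≤ |y|) (k : ℕ) :
    ‖wrightTerm ρ β k x‖ ≤ ‖wrightTerm ρ β k y‖ := by
  simp only [wrightTerm, norm_div, norm_pow, Real.norm_eq_abs]
  gcongr

theorem hasDerivAt_wrightTerm_succ (ρ β : ℝ) (k : ℕ) (x : ℝ) :
    HasDerivAt (wrightTerm ρ β (k + 1)) (wrightTerm ρ (ρ + β) k x) x := by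
  refine ((hasDerivAt_pow (k + 1) x).div_const _).congr_deriv ?_
  rw [wrightTerm, factorial_succ]
  push_cast
  field_simp
  ring_nf

theorem hasDerivAt_tsum_wrightTerm_succ {ρ : ℝ} (hρ : -1 < ρ) (β x : ℝ) :
    HasDerivAt (fun y => ∑' k, wrightTerm ρ β (k + 1) y) (∑' k, wrightTerm ρ (ρ + β) k x) x := by
  set R := |x| + 1
  have hR : 0 < R := by positivity
  refine hasDerivAt_tsum_of_isPreconnected (summable_norm_wrightTerm hρ (ρ + β) R)
    Metric.isOpen_ball (convex_ball 0 R).isPreconnected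
    (fun k y _ => hasDerivAt_wrightTerm_succ ρ β k y) (fun k y hy => ?_)
    (Metric.mem_ball_self hR) ?_ (mem_ball_zero_iff.2 (lt_add_one _))
  · refine norm_wrightTerm_le ?_ k
    rw [abs_of_pos hR]
    exact (mem_ball_zero_iff.1 hy).le
  · exact (summable_norm_wrightTerm hρ β 0).of_norm.comp_injective (add_left_injective 1)

/-- For `ρ > -1` and `β ∈ ℝ`, the Wright function `x ↦ W(x,ρ,β)` is
differentiable on `ℝ` with derivative `(d/dx) W(x,ρ,β) = W(x,ρ,ρ+β)`. -/
theorem wright_hasDerivAt (ρ β : ℝ) (hρ : -1 < ρ) :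
    ∀ x : ℝ, HasDerivAt (fun y => wright y ρ β) (wright x ρ (ρ + β)) x := by
  intro x
  have hsplit : (fun y => wright y ρ β) =
      fun y => wrightTerm ρ β 0 y + ∑' k, wrightTerm ρ β (k + 1) y := by
    funext y
    exact (summable_norm_wrightTerm hρ β y).of_norm.tsum_eq_zero_add
  have hconst : wrightTerm ρ β 0 = fun _ => (Gamma β)⁻¹ := by
    funext y
    simp [wrightTerm]
  rw [hsplit, wright_eq_tsum_wrightTerm, ← zero_add (∑' k, wrightTerm ρ (ρ + β) k x), hconst]
  exact (hasDerivAt_const x _).add (hasDerivAt_tsum_wrightTerm_succ hρ β x)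
end

section
/- For every x ≥ 0, lim_{α→1⁻} W(-2x, -α/2, 1-α/2) = e^{-x²}/√π, and this convergence is uniform on compact subsets of [0,∞); that is, the Mainardi function M_{α/2}(2x) = W(-2x, -α/2, 1-α/2) converges, uniformly on compact sets, to e^{-x²}/√π as α increases to 1. -/
open MeasureTheory Filter Topology Set

/-!
Write `W(-2x, -α/2, 1-α/2) = ∑ c_k(α) x^k` with `c_k(α) = (-2)^k / (k! Γ(1 - α(k+1)/2))`; each
`c_k` is continuous in `α` because `1/Γ` is entire. At `α = 1` the odd coefficients vanish (poles
of `Γ`) and `Γ(1/2 - m) = (-4)^m m! √π / (2m)!` turns the even part into the exponential series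
of `e^{-x²}/√π`. For `α ∈ [1/2, 1]` and `k ≥ 7` we have `α(k+1)/2 ≥ 2`, so the reflection formula
and the monotonicity of `Γ` on `[2, ∞)` give the summable majorant
`|c_k(α)| R^k ≤ (2R)^k / (π ⌊k/2⌋!)`; Tannery's theorem then yields convergence of the series
uniformly in `|x| ≤ R`.
-/

section PowerSeriesLimit

variable {β 𝕜 : Type*} [NormedField 𝕜] {l : Filter β} {c : β → ℕ → 𝕜}
  {c₀ : ℕ → 𝕜} {u : ℕ → ℝ} {R : ℝ} {N : ℕ}

theorem summable_mul_pow_of_norm_mul_pow_le [CompleteSpace 𝕜] {b : ℕ → 𝕜} {x : 𝕜} (hu : Summable u)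
    (hb : ∀ k ≥ N, ‖b k‖ * R ^ k ≤ u k) (hx : ‖x‖ ≤ R) : Summable fun k => b k * x ^ k := by
  refine .of_norm_bounded_eventually_nat hu (eventually_atTop.2 ⟨N, fun k hk => ?_⟩)
  rw [norm_mul, norm_pow]
  exact (mul_le_mul_of_nonneg_left (pow_le_pow_left₀ (norm_nonneg x) hx k) (norm_nonneg _)).trans
    (hb k hk)

theorem norm_mul_pow_le_of_tendsto [l.NeBot] (hc : ∀ k, Tendsto (c · k) l (𝓝 (c₀ k)))
    (hbound : ∀ᶠ a in l, ∀ k ≥ N, ‖c a k‖ * R ^ k ≤ u k) : ∀ k ≥ N, ‖c₀ k‖ * R ^ k ≤ u k :=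
  fun k hk => le_of_tendsto ((hc k).norm.mul_const _) (hbound.mono fun _ h => h k hk)

theorem tendsto_tsum_norm_mul_pow_of_tendsto_zero (hR : 0 ≤ R) {e : β → ℕ → 𝕜}
    (he : ∀ k, Tendsto (e · k) l (𝓝 0)) (hu : Summable u)
    (hbound : ∀ᶠ a in l, ∀ k ≥ N, ‖e a k‖ * R ^ k ≤ u k) :
    Tendsto (fun a => ∑' k, ‖e a k‖ * R ^ k) l (𝓝 0) := by
  classical
  have hsum : Summable fun k => if k < N then R ^ k else u k :=
    (summable_nat_add_iff N).1 (by simpa using (summable_nat_add_iff N).2 hu)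
  have hsmall : ∀ᶠ a in l, ∀ k ∈ Finset.range N, ‖e a k‖ ≤ 1 :=
    (eventually_all_finset _).2 fun k _ => by
      simpa using (he k).eventually (Metric.closedBall_mem_nhds _ one_pos)
  have hlim := tendsto_tsum_of_dominated_convergence (g := fun _ => (0 : ℝ)) hsum
    (fun k => by simpa using (he k).norm.mul_const (R ^ k)) ?_
  · simpa using hlim
  filter_upwards [hsmall, hbound] with a hs hb k
  rw [norm_mul, norm_norm, norm_pow, Real.norm_of_nonneg hR]
  split_ifs with hk
  · simpa using mul_le_mul_of_nonneg_right (hs k (Finset.mem_range.2 hk)) (pow_nonneg hR k)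
  · exact hb k (not_lt.1 hk)

theorem tendstoUniformlyOn_tsum_mul_pow [CompleteSpace 𝕜] [l.NeBot] (hR : 0 ≤ R)
    (hc : ∀ k, Tendsto (c · k) l (𝓝 (c₀ k))) (hu : Summable u)
    (hbound : ∀ᶠ a in l, ∀ k ≥ N, ‖c a k‖ * R ^ k ≤ u k) :
    TendstoUniformlyOn (fun a x => ∑' k, c a k * x ^ k) (fun x => ∑' k, c₀ k * x ^ k) l
      (Metric.closedBall 0 R) := by
  have hc₀ := norm_mul_pow_le_of_tendsto hc hbound
  have hdiff : ∀ᶠ a in l, ∀ k ≥ N, ‖c a k - c₀ k‖ * R ^ k ≤ 2 * u k := by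
    filter_upwards [hbound] with a ha k hk
    linarith [mul_le_mul_of_nonneg_right (norm_sub_le (c a k) (c₀ k)) (pow_nonneg hR k), ha k hk,
      hc₀ k hk]
  have hlim := tendsto_tsum_norm_mul_pow_of_tendsto_zero hR
    (fun k => by simpa using (hc k).sub_const (c₀ k)) (hu.mul_left 2) hdiff
  rw [Metric.tendstoUniformlyOn_iff]
  intro ε hε
  filter_upwards [hlim.eventually (gt_mem_nhds hε), hdiff] with a hε' hda x hx
  rw [mem_closedBall_zero_iff] at hx
  have hsum₀ := summable_mul_pow_of_norm_mul_pow_le hu hc₀ hx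
  have hsumd := summable_mul_pow_of_norm_mul_pow_le (hu.mul_left 2) hda hx
  have hnorm : Summable fun k => ‖c a k - c₀ k‖ * R ^ k :=
    .of_norm_bounded_eventually_nat (hu.mul_left 2) (eventually_atTop.2 ⟨N, fun k hk => by
      rw [Real.norm_of_nonneg (by positivity)]; exact hda k hk⟩)
  have hsplit : ∑' k, c a k * x ^ k = ∑' k, c₀ k * x ^ k + ∑' k, (c a k - c₀ k) * x ^ k := by
    rw [← hsum₀.tsum_add hsumd]
    exact tsum_congr fun k => by ring
  rw [hsplit, dist_self_add_right]
  refine (tsum_of_norm_bounded hnorm.hasSum fun k => ?_).trans_lt hε'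
  rw [norm_mul, norm_pow]
  exact mul_le_mul_of_nonneg_left (pow_le_pow_left₀ (norm_nonneg x) hx k) (norm_nonneg _)

end PowerSeriesLimit

open scoped Nat
open Real

theorem Real.continuous_inv_Gamma : Continuous fun s : ℝ => (Gamma s)⁻¹ := by
  have h (s : ℝ) : (Gamma s)⁻¹ = ((Complex.Gamma s)⁻¹).re := by
    rw [Complex.Gamma_ofReal, ← Complex.ofReal_inv, Complex.ofReal_re]
  simp only [h]
  exact Complex.continuous_re.comp
    (Complex.differentiable_one_div_Gamma.continuous.comp Complex.continuous_ofReal)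

theorem Real.inv_Gamma_one_sub {s : ℝ} (hs : 0 < s) :
    (Gamma (1 - s))⁻¹ = Gamma s * sin (π * s) / π := by
  have hrefl := Gamma_mul_Gamma_one_sub s
  have hΓ := (Gamma_pos_of_pos hs).ne'
  by_cases hsin : sin (π * s) = 0
  · rw [hsin, div_zero, mul_eq_zero, or_iff_right hΓ] at hrefl
    rw [hrefl, hsin]
    simp
  · rw [eq_div_iff hsin] at hrefl
    have hΓ' : Gamma (1 - s) ≠ 0 := by
      rintro h
      rw [h, mul_zero, zero_mul] at hrefl
      exact pi_ne_zero hrefl.symm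
    rw [eq_div_iff pi_ne_zero, inv_mul_eq_iff_eq_mul₀ hΓ']
    linear_combination -hrefl

theorem Real.abs_inv_Gamma_one_sub_le {s : ℝ} (hs : 0 < s) :
    |(Gamma (1 - s))⁻¹| ≤ Gamma s / π := by
  rw [inv_Gamma_one_sub hs, abs_div, abs_mul, abs_of_pos (Gamma_pos_of_pos hs), abs_of_pos pi_pos]
  gcongr
  exact (mul_le_iff_le_one_right (Gamma_pos_of_pos hs)).2 (abs_sin_le_one _)

theorem Real.Gamma_one_half_sub_nat (m : ℕ) :
    Gamma (1 / 2 - m) = (-4) ^ m * m ! * √π / (2 * m)! := by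
  induction m with
  | zero => simpa using Gamma_one_half_eq
  | succ n ih =>
    have hne : (1 / 2 : ℝ) - (n + 1) ≠ 0 := (by linarith [n.cast_nonneg (α := ℝ)] : _ < (0 : ℝ)).ne
    have hrec := Gamma_add_one hne
    rw [show (1 / 2 : ℝ) - (n + 1) + 1 = 1 / 2 - n by ring, ih, div_eq_iff (by positivity)] at hrec
    rw [show 2 * (n + 1) = 2 * n + 1 + 1 by ring, Nat.factorial_succ, Nat.factorial_succ,
      Nat.factorial_succ]
    push_cast
    rw [eq_div_iff (by positivity)]
    linear_combination (4 * (n : ℝ) + 4) * hrec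

theorem Real.summable_pow_div_factorial_div_two (x : ℝ) :
    Summable fun k : ℕ => x ^ k / (k / 2)! := by
  refine .even_add_odd ?_ ?_
  · simpa [pow_mul] using summable_pow_div_factorial (x ^ 2)
  · have := (summable_pow_div_factorial (x ^ 2)).mul_left x
    refine this.congr fun m => ?_
    rw [show (2 * m + 1) / 2 = m by omega]
    ring

theorem Nat.factorial_div_two_mul_self_le (k : ℕ) : (k / 2)! * (k / 2)! ≤ k ! :=
  calc (k / 2)! * (k / 2)! ≤ (k / 2)! * (k - k / 2)! := by gcongr; omega
    _ ≤ k ! := Nat.le_of_dvd k.factorial_pos <| by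
      simpa [Nat.add_sub_cancel' (k.div_le_self 2)] using
        Nat.factorial_mul_factorial_dvd_factorial_add (k / 2) (k - k / 2)

noncomputable def mainardiCoeff (α : ℝ) (k : ℕ) : ℝ :=
  (-2) ^ k / (k ! * Gamma (1 - α * (k + 1) / 2))

theorem wright_neg_two_mul_eq_tsum (α x : ℝ) :
    wright (-(2 * x)) (-(α / 2)) (1 - α / 2) = ∑' k, mainardiCoeff α k * x ^ k := by
  refine tsum_congr fun k => ?_
  rw [mainardiCoeff, show -(α / 2) * k + (1 - α / 2) = 1 - α * (k + 1) / 2 by ring,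
    show -(2 * x) = -2 * x by ring, mul_pow]
  ring

theorem continuous_mainardiCoeff (k : ℕ) : Continuous (mainardiCoeff · k) := by
  simp only [mainardiCoeff, div_eq_mul_inv, mul_inv]
  exact continuous_const.mul (continuous_const.mul (continuous_inv_Gamma.comp (by fun_prop)))

theorem mainardiCoeff_one_two_mul (m : ℕ) :
    mainardiCoeff 1 (2 * m) = (-1) ^ m / (m ! * √π) := by
  rw [mainardiCoeff, show 1 - 1 * ((2 * m : ℕ) + 1 : ℝ) / 2 = 1 / 2 - m by push_cast; ring,
    Gamma_one_half_sub_nat, pow_mul, neg_pow (4 : ℝ)]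
  field_simp
  rw [← pow_mul, ← pow_mul, mul_comm m 2, pow_mul, pow_mul]
  norm_num

theorem mainardiCoeff_one_two_mul_add_one (m : ℕ) : mainardiCoeff 1 (2 * m + 1) = 0 := by
  rw [mainardiCoeff, show 1 - 1 * ((2 * m + 1 : ℕ) + 1 : ℝ) / 2 = -m by push_cast; ring,
    Gamma_neg_nat_eq_zero, mul_zero, div_zero]

theorem hasSum_mainardiCoeff_one (x : ℝ) :
    HasSum (fun k => mainardiCoeff 1 k * x ^ k) (exp (-x ^ 2) / √π) := by
  have hodd : ∀ k ∉ range (2 * ·), mainardiCoeff 1 k * x ^ k = 0 := by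
    intro k hk
    obtain ⟨m, rfl⟩ : Odd k :=
      Nat.not_even_iff_odd.1 fun ⟨m, hm⟩ => hk ⟨m, show 2 * m = k by omega⟩
    rw [mainardiCoeff_one_two_mul_add_one, zero_mul]
  have heven (m : ℕ) : mainardiCoeff 1 (2 * m) * x ^ (2 * m) = (-x ^ 2) ^ m / m ! / √π := by
    rw [mainardiCoeff_one_two_mul, pow_mul, neg_pow (x ^ 2)]
    ring
  rw [← (mul_right_injective₀ two_ne_zero).hasSum_iff hodd, Function.comp_def]
  simp only [heven]
  rw [exp_eq_exp_ℝ]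
  exact (NormedSpace.expSeries_div_hasSum_exp (-x ^ 2)).div_const √π

theorem abs_mainardiCoeff_mul_pow_le {α R : ℝ} (hα : α ∈ Icc (1 / 2) 1) (hR : 0 ≤ R) {k : ℕ}
    (hk : 7 ≤ k) : |mainardiCoeff α k| * R ^ k ≤ (2 * R) ^ k / (k / 2)! / π := by
  obtain ⟨hα₁, hα₂⟩ := hα
  set s := α * (k + 1) / 2 with hs
  have hk' : (7 : ℝ) ≤ k := by exact_mod_cast hk
  have hs₂ : 2 ≤ s := by nlinarith
  have hsk : s ≤ (k / 2 : ℕ) + 1 := by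
    have : (k : ℝ) ≤ 2 * (k / 2 : ℕ) + 1 := by exact_mod_cast (by omega : k ≤ 2 * (k / 2) + 1)
    nlinarith
  have hΓ : |(Gamma (1 - s))⁻¹| ≤ (k / 2)! / π :=
    calc _ ≤ Gamma s / π := abs_inv_Gamma_one_sub_le (by linarith)
      _ ≤ Gamma ((k / 2 : ℕ) + 1) / π := by
        gcongr
        exact Gamma_strictMonoOn_Ici.monotoneOn hs₂ (by simp only [mem_Ici]; linarith) hsk
      _ = (k / 2)! / π := by rw [Gamma_nat_eq_factorial]
  have hfact : ((k / 2)! * (k / 2)! : ℝ) ≤ k ! := by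
    exact_mod_cast Nat.factorial_div_two_mul_self_le k
  calc |mainardiCoeff α k| * R ^ k = 2 ^ k / k ! * |(Gamma (1 - s))⁻¹| * R ^ k := by
        rw [mainardiCoeff, ← hs, abs_div, abs_mul, abs_pow, abs_neg, abs_two, Nat.abs_cast,
          abs_inv]
        ring
    _ ≤ 2 ^ k / k ! * ((k / 2)! / π) * R ^ k := by gcongr
    _ = (2 * R) ^ k * (k / 2)! / (k ! * π) := by rw [mul_pow]; ring
    _ ≤ (2 * R) ^ k * (k / 2)! / ((k / 2)! * (k / 2)! * π) := by gcongr
    _ = (2 * R) ^ k / (k / 2)! / π := by field_simp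

/-- The Mainardi function `M_{α/2}(2x) = W(-2x,-α/2,1-α/2)` converges to
`e^{-x²}/√π` as `α → 1⁻`, pointwise on `[0,∞)` and uniformly on compact subsets of `[0,∞)`. -/
theorem mainardi_tendsto_gaussian :
    (∀ x : ℝ, 0 ≤ x →
      Filter.Tendsto (fun α : ℝ => wright (-(2 * x)) (-(α / 2)) (1 - α / 2))
        (nhdsWithin 1 (Set.Ioo (0:ℝ) 1))
        (nhds (Real.exp (-x ^ 2) / Real.sqrt Real.pi))) ∧
    (∀ K : Set ℝ, K ⊆ Set.Ici 0 → IsCompact K →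
      TendstoUniformlyOn (fun (α : ℝ) (x : ℝ) => wright (-(2 * x)) (-(α / 2)) (1 - α / 2))
        (fun x => Real.exp (-x ^ 2) / Real.sqrt Real.pi)
        (nhdsWithin 1 (Set.Ioo (0:ℝ) 1)) K) := by
  have uniform (K : Set ℝ) (hK : IsCompact K) :
      TendstoUniformlyOn (fun (α : ℝ) (x : ℝ) => wright (-(2 * x)) (-(α / 2)) (1 - α / 2))
        (fun x => Real.exp (-x ^ 2) / Real.sqrt Real.pi) (𝓝[Ioo 0 1] 1) K := by
    obtain ⟨R, hR, hKR⟩ := hK.isBounded.subset_closedBall_lt 0 0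
    simp only [wright_neg_two_mul_eq_tsum, ← (hasSum_mainardiCoeff_one _).tsum_eq]
    rw [nhdsWithin_Ioo_eq_nhdsLT one_pos]
    refine (tendstoUniformlyOn_tsum_mul_pow (N := 7) hR.le
      (fun k => (continuous_mainardiCoeff k).continuousAt.tendsto.mono_left nhdsWithin_le_nhds)
      ((Real.summable_pow_div_factorial_div_two (2 * R)).div_const π) ?_).mono hKR
    filter_upwards [Icc_mem_nhdsLT (by norm_num : (1 / 2 : ℝ) < 1)] with α hα k hk
    exact abs_mainardiCoeff_mul_pow_le hα hR.le hk
  refine ⟨fun x _ => ?_, fun K _ hK => uniform K hK⟩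
  simpa using (uniform {x} isCompact_singleton).tendsto_at (mem_singleton x)
end
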